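/- arXiv:1512.05269 — 5 statements merged into one kernel-verified Lean document; each statement's English description precedes it below -/
import Mathlib

section
/- Let z, L, x, y ∈ ℂ and set X := e^{izL}. Assume X ≠ 1 and X ≠ 3 (in particular sin(zL/2) ≠ 0). Then −e^{iz(x+y)}/((X−1)(X−3)) + X²·e^{iz(x−y)}/((X−1)(X−3)) + X(2−X)·e^{iz(y−x)}/((X−1)(X−3)) + X²(2X−3)·e^{−iz(x+y)}/((X−1)(X−3)) = ((X+1)/(X−3))·e^{iz(x−y)} + (2X(X−1)/(X−3))·e^{−iz(x+y)} − 2i·((X−1)/(X−3))·sin(zy)·e^{−izx} + (1 + 2/(X−3))·sin(zx)·sin(zy) + i·(cos(zL/2)/sin(zL/2))·sin(zx)·sin(zy). -/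
/-!
Put `a = e^{izx}`, `b = e^{izy}` and `X = e^{izL}`. Every exponential in the identity is a
monomial in `a^{±1}, b^{±1}`, the sines are `sin(zx) = (a⁻¹ - a) i / 2` and similarly for `b`,
and `i cot(zL/2) = (X + 1)/(1 - X)`. The claim thus becomes an identity of rational functions
in `a, b, X`, which holds once the denominators `a`, `b`, `X - 1`, `X - 3` are cleared.
-/

open Complex

theorem Complex.I_mul_cos_div_sin_eq_exp_ratio (w : ℂ) :
    I * (cos w / sin w) = (exp (2 * I * w) + 1) / (1 - exp (2 * I * w)) := by
  rw [← cot_eq_cos_div_sin, cot_eq_exp_ratio, mul_div_assoc', mul_div_mul_left _ _ I_ne_zero]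

theorem Complex.sin_eq_inv_exp_sub_exp (w : ℂ) :
    sin w = ((exp (I * w))⁻¹ - exp (I * w)) * I / 2 := by
  rw [eq_div_iff two_ne_zero, mul_comm, two_sin, neg_mul, exp_neg, mul_comm w]

theorem tadpole_kernel_rational_identity (a b X : ℂ) (ha : a ≠ 0) (hb : b ≠ 0) (hX1 : X ≠ 1)
    (hX3 : X ≠ 3) :
    -(a * b) / ((X - 1) * (X - 3))
      + X ^ 2 * (a / b) / ((X - 1) * (X - 3))
      + X * (2 - X) * (b / a) / ((X - 1) * (X - 3))
      + X ^ 2 * (2 * X - 3) * (a * b)⁻¹ / ((X - 1) * (X - 3))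
    = (X + 1) / (X - 3) * (a / b)
      + 2 * X * (X - 1) / (X - 3) * (a * b)⁻¹
      - 2 * I * ((X - 1) / (X - 3)) * ((b⁻¹ - b) * I / 2) * a⁻¹
      + (1 + 2 / (X - 3)) * ((a⁻¹ - a) * I / 2) * ((b⁻¹ - b) * I / 2)
      + (X + 1) / (1 - X) * ((a⁻¹ - a) * I / 2) * ((b⁻¹ - b) * I / 2) := by
  have h1 : X - 1 ≠ 0 := sub_ne_zero.mpr hX1
  have h1' : 1 - X ≠ 0 := sub_ne_zero.mpr hX1.symm
  have h3 : X - 3 ≠ 0 := sub_ne_zero.mpr hX3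
  field_simp
  ring_nf
  rw [I_sq]
  ring

theorem stmt_8 (z L x y : ℂ) (X : ℂ) (hX : X = Complex.exp (I * z * L))
    (hX1 : X ≠ 1) (hX3 : X ≠ 3) :
    -Complex.exp (I * z * (x + y)) / ((X - 1) * (X - 3))
      + X ^ 2 * Complex.exp (I * z * (x - y)) / ((X - 1) * (X - 3))
      + X * (2 - X) * Complex.exp (I * z * (y - x)) / ((X - 1) * (X - 3))
      + X ^ 2 * (2 * X - 3) * Complex.exp (-(I * z * (x + y))) / ((X - 1) * (X - 3))
    = (X + 1) / (X - 3) * Complex.exp (I * z * (x - y))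
      + 2 * X * (X - 1) / (X - 3) * Complex.exp (-(I * z * (x + y)))
      - 2 * I * ((X - 1) / (X - 3)) * Complex.sin (z * y) * Complex.exp (-(I * z * x))
      + (1 + 2 / (X - 3)) * Complex.sin (z * x) * Complex.sin (z * y)
      + I * (Complex.cos (z * L / 2) / Complex.sin (z * L / 2))
          * Complex.sin (z * x) * Complex.sin (z * y) := by
  have hzL : 2 * I * (z * L / 2) = I * z * L := by ring
  rw [I_mul_cos_div_sin_eq_exp_ratio, hzL, ← hX, sin_eq_inv_exp_sub_exp (z * x),
    sin_eq_inv_exp_sub_exp (z * y), ← mul_assoc, ← mul_assoc, mul_add (I * z), mul_sub (I * z),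
    mul_sub (I * z), exp_neg, exp_neg, exp_add, exp_sub, exp_sub]
  exact tadpole_kernel_rational_identity _ _ X (exp_ne_zero _) (exp_ne_zero _) hX1 hX3
end

section
/- Let a < b be real numbers, λ > 0 and M > 0. Let Φ : ℝ → ℝ be twice continuously differentiable on [a, b] with |Φ''(x)| ≥ M for all x ∈ [a, b], and let Ψ : ℝ → ℂ be continuously differentiable on [a, b]. Then ‖∫_a^b e^{iλΦ(x)}·Ψ(x) dx‖ ≤ (8/√(λM))·(‖Ψ(b)‖ + ∫_a^b ‖Ψ'(x)‖ dx). -/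
/-!
Van der Corput's lemma in Stein's form. If `φ'` is monotone and `|φ'| ≥ δ`, writing
`e^{iλφ} = (e^{iλφ})' / (iλφ')` and integrating by parts bounds `∫ e^{iλφ}` by `3 / (λδ)`: two
boundary terms plus the total variation of `1 / φ'`. If `φ'' ≥ M`, the set where `|φ'| < δ` is an
interval of length at most `2δ / M`; estimating trivially there and by the first bound on the two
remaining pieces gives `8 / √(λM)` for `δ = √(M / λ)`, and `φ'' ≤ -M` reduces to this by complex
conjugation. The amplitude `Ψ` is then absorbed by a last integration by parts against the primitive
`x ↦ ∫_a^x e^{iλΦ}`, which is bounded by `8 / √(λM)` uniformly in `x`.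
-/

open MeasureTheory Complex Set intervalIntegral ComplexConjugate

lemma norm_cexp_I_mul_ofReal_mul_ofReal (lam t : ℝ) : ‖exp (I * lam * t)‖ = 1 := by
  simp [Complex.norm_exp]

lemma norm_integral_cexp_neg_phase (lam : ℝ) (φ : ℝ → ℝ) (c d : ℝ) :
    ‖∫ x in c..d, exp (I * lam * ((-φ x : ℝ) : ℂ))‖ = ‖∫ x in c..d, exp (I * lam * φ x)‖ := by
  have h : ∀ x, exp (I * lam * ((-φ x : ℝ) : ℂ)) = conj (exp (I * lam * φ x)) := fun x ↦ by
    rw [← Complex.exp_conj, map_mul, map_mul, conj_I, conj_ofReal, conj_ofReal]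
    push_cast
    ring_nf
  simp_rw [h, intervalIntegral_conj, RCLike.norm_conj]

lemma inv_sub_inv_le_inv_of_le_abs {x y δ : ℝ} (hδ : 0 < δ) (hxy : x ≤ y) (hx : δ ≤ |x|)
    (hy : δ ≤ |y|) : x⁻¹ - y⁻¹ ≤ δ⁻¹ := by
  rcases le_abs'.1 hx with hx | hx
  · rcases le_abs'.1 hy with hy | hy
    · have : (-y)⁻¹ ≤ δ⁻¹ := inv_anti₀ hδ (by linarith)
      have : x⁻¹ < 0 := inv_lt_zero.2 (by linarith)
      rw [inv_neg] at *
      linarith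
    · have : x⁻¹ < 0 := inv_lt_zero.2 (by linarith)
      have : 0 < y⁻¹ := inv_pos.2 (by linarith)
      linarith [inv_pos.2 hδ]
  · have : x⁻¹ ≤ δ⁻¹ := inv_anti₀ hδ hx
    have : 0 < y⁻¹ := inv_pos.2 (by linarith)
    linarith

section Icc

variable {F : Type*} [NormedAddCommGroup F] [NormedSpace ℝ F] {f f' : ℝ → F} {a b : ℝ}

lemma hasDerivAt_of_forall_hasDerivWithinAt_Icc
    (h : ∀ x ∈ Icc a b, HasDerivWithinAt f (f' x) (Icc a b) x) :
    ∀ x ∈ Ioo a b, HasDerivAt f (f' x) x :=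
  fun x hx ↦ (h x (Ioo_subset_Icc_self hx)).hasDerivAt (Icc_mem_nhds hx.1 hx.2)

lemma hasDerivWithinAt_mono_Icc {c d : ℝ}
    (h : ∀ x ∈ Icc a b, HasDerivWithinAt f (f' x) (Icc a b) x) (hc : a ≤ c) (hd : d ≤ b) :
    ∀ x ∈ Icc c d, HasDerivWithinAt f (f' x) (Icc c d) x :=
  fun x hx ↦ (h x (Icc_subset_Icc hc hd hx)).mono (Icc_subset_Icc hc hd)

end Icc

lemma mul_sub_le_sub_of_le_hasDerivWithinAt_Icc {f f' : ℝ → ℝ} {c d M : ℝ}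
    (hf : ∀ x ∈ Icc c d, HasDerivWithinAt f (f' x) (Icc c d) x) (hM : ∀ x ∈ Icc c d, M ≤ f' x) :
    ∀ x ∈ Icc c d, ∀ y ∈ Icc c d, x ≤ y → M * (y - x) ≤ f y - f x := by
  have hf' := hasDerivAt_of_forall_hasDerivWithinAt_Icc hf
  refine (convex_Icc c d).mul_sub_le_image_sub_of_le_deriv (HasDerivWithinAt.continuousOn hf)
    (fun x hx ↦ ?_) fun x hx ↦ ?_ <;> rw [interior_Icc] at hx
  · exact (hf' x hx).differentiableAt.differentiableWithinAt
  · rw [(hf' x hx).deriv]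
    exact hM x (Ioo_subset_Icc_self hx)

lemma hasDerivWithinAt_derivWithin_of_contDiffOn_two {𝕜 F : Type*} [NontriviallyNormedField 𝕜]
    [NormedAddCommGroup F] [NormedSpace 𝕜 F] {f : 𝕜 → F} {s : Set 𝕜} (hs : UniqueDiffOn 𝕜 s)
    (hf : ContDiffOn 𝕜 2 f s) :
    ∀ x ∈ s, HasDerivWithinAt (derivWithin f s) (iteratedDerivWithin 2 f s x) s x := by
  intro x hx
  rw [iteratedDerivWithin_succ', iteratedDerivWithin_one]
  exact ((hf.derivWithin hs (m := 1) le_rfl).differentiableOn one_ne_zero x hx).hasDerivWithinAt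

theorem norm_integral_deriv_mul_le {v v' Ψ Ψ' : ℝ → ℂ} {a b C : ℝ} (hab : a ≤ b)
    (hv : ContinuousOn v (Icc a b)) (hvv' : ∀ x ∈ Ioo a b, HasDerivAt v (v' x) x)
    (hΨ : ContinuousOn Ψ (Icc a b)) (hΨΨ' : ∀ x ∈ Ioo a b, HasDerivAt Ψ (Ψ' x) x)
    (hv' : IntervalIntegrable v' volume a b) (hΨ' : IntervalIntegrable Ψ' volume a b)
    (hC : ∀ x ∈ Icc a b, ‖v x‖ ≤ C) :
    ‖∫ x in a..b, v' x * Ψ x‖ ≤ ‖v b‖ * ‖Ψ b‖ + ‖v a‖ * ‖Ψ a‖ + C * ∫ x in a..b, ‖Ψ' x‖ := by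
  rw [← uIcc_of_le hab] at hv hΨ
  have hparts := integral_mul_deriv_eq_deriv_mul_of_hasDerivAt hΨ hv
    (by rwa [min_eq_left hab, max_eq_right hab]) (by rwa [min_eq_left hab, max_eq_right hab])
    hΨ' hv'
  simp_rw [mul_comm (v' _), hparts]
  have hrest : ‖∫ x in a..b, Ψ' x * v x‖ ≤ C * ∫ x in a..b, ‖Ψ' x‖ := by
    rw [← intervalIntegral.integral_const_mul]
    refine norm_integral_le_of_norm_le hab (.of_forall fun x hx ↦ ?_) (hΨ'.norm.const_mul C)
    rw [norm_mul, mul_comm]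
    exact mul_le_mul_of_nonneg_right (hC x (Ioc_subset_Icc_self hx)) (norm_nonneg _)
  calc ‖Ψ b * v b - Ψ a * v a - ∫ x in a..b, Ψ' x * v x‖
      ≤ ‖Ψ b * v b‖ + ‖Ψ a * v a‖ + ‖∫ x in a..b, Ψ' x * v x‖ :=
        norm_sub_le_of_le (norm_sub_le _ _) le_rfl
    _ ≤ _ := by rw [norm_mul, norm_mul, mul_comm ‖Ψ b‖, mul_comm ‖Ψ a‖]; linarith

theorem norm_integral_mul_le_of_norm_primitive_le {E Ψ Ψ' : ℝ → ℂ} {a b C : ℝ} (hab : a ≤ b)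
    (hE : ContinuousOn E (Icc a b)) (hΨ : ContinuousOn Ψ (Icc a b))
    (hΨΨ' : ∀ x ∈ Ioo a b, HasDerivAt Ψ (Ψ' x) x) (hΨ' : IntervalIntegrable Ψ' volume a b)
    (hC : ∀ x ∈ Icc a b, ‖∫ t in a..x, E t‖ ≤ C) :
    ‖∫ x in a..b, E x * Ψ x‖ ≤ C * (‖Ψ b‖ + ∫ x in a..b, ‖Ψ' x‖) := by
  have hprim : ContinuousOn (fun x ↦ ∫ t in a..x, E t) (Icc a b) := by
    simpa [uIcc_of_le hab] using continuousOn_primitive_interval (μ := volume)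
      (hE.integrableOn_Icc.mono_set (uIcc_of_le hab).le)
  have hderiv : ∀ x ∈ Ioo a b, HasDerivAt (fun x ↦ ∫ t in a..x, E t) (E x) x := fun x hx ↦
    integral_hasDerivAt_right
      ((hE.mono (Icc_subset_Icc le_rfl hx.2.le)).intervalIntegrable_of_Icc hx.1.le)
      ((hE.mono Ioo_subset_Icc_self).stronglyMeasurableAtFilter isOpen_Ioo x hx)
      (hE.continuousAt (Icc_mem_nhds hx.1 hx.2))
  refine (norm_integral_deriv_mul_le hab hprim hderiv hΨ hΨΨ' (hE.intervalIntegrable_of_Icc hab)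
    hΨ' hC).trans ?_
  rw [integral_same, norm_zero, zero_mul, add_zero, mul_add]
  gcongr
  exact hC b (right_mem_Icc.2 hab)

theorem norm_integral_cexp_le_of_hasDerivWithinAt_inv {φ φ' w' : ℝ → ℝ} {c d lam : ℝ}
    (hcd : c ≤ d) (hlam : 0 < lam) (hφ : ∀ x ∈ Icc c d, HasDerivWithinAt φ (φ' x) (Icc c d) x)
    (hφ'0 : ∀ x ∈ Icc c d, φ' x ≠ 0)
    (hw : ∀ x ∈ Icc c d, HasDerivWithinAt (fun y ↦ (φ' y)⁻¹) (w' x) (Icc c d) x)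
    (hw'c : ContinuousOn w' (Icc c d)) :
    ‖∫ x in c..d, exp (I * lam * φ x)‖
      ≤ lam⁻¹ * (|(φ' d)⁻¹| + |(φ' c)⁻¹| + ∫ x in c..d, |w' x|) := by
  have hφ'c : ContinuousOn φ' (Icc c d) :=
    ((HasDerivWithinAt.continuousOn hw).inv₀ fun x hx ↦ inv_ne_zero (hφ'0 x hx)).congr
      fun x _ ↦ (inv_inv (φ' x)).symm
  set E : ℝ → ℂ := fun x ↦ exp (I * lam * φ x)
  have hE : ∀ x ∈ Icc c d, HasDerivWithinAt E (E x * (I * lam * φ' x)) (Icc c d) x :=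
    fun x hx ↦ ((hφ x hx).ofReal_comp.const_mul (I * lam)).cexp
  set u : ℝ → ℂ := fun x ↦ (I * lam)⁻¹ * ((φ' x)⁻¹ : ℝ)
  have hu : ∀ x ∈ Icc c d, HasDerivWithinAt u ((I * lam)⁻¹ * (w' x : ℂ)) (Icc c d) x :=
    fun x hx ↦ (hw x hx).ofReal_comp.const_mul _
  have hlam0 : (lam : ℂ) ≠ 0 := ofReal_ne_zero.2 hlam.ne'
  -- `E = E' * u` with `u = 1 / (I lam φ')`, so integrating by parts gains the factor `lam⁻¹`
  have hintegrand : EqOn (fun x ↦ E x * (I * lam * φ' x) * u x) E (uIcc c d) := fun x hx ↦ by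
    have : (φ' x : ℂ) ≠ 0 := ofReal_ne_zero.2 (hφ'0 x (uIcc_of_le hcd ▸ hx))
    simp only [u]
    push_cast
    field_simp
  have hE'c : ContinuousOn (fun x ↦ E x * (I * lam * φ' x)) (Icc c d) :=
    (HasDerivWithinAt.continuousOn hE).mul
      (continuousOn_const.mul (continuous_ofReal.comp_continuousOn hφ'c))
  have hu'c : ContinuousOn (fun x ↦ (I * lam)⁻¹ * (w' x : ℂ)) (Icc c d) :=
    continuousOn_const.mul (continuous_ofReal.comp_continuousOn hw'c)
  rw [← integral_congr hintegrand]
  refine (norm_integral_deriv_mul_le hcd (HasDerivWithinAt.continuousOn hE)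
    (hasDerivAt_of_forall_hasDerivWithinAt_Icc hE) (HasDerivWithinAt.continuousOn hu)
    (hasDerivAt_of_forall_hasDerivWithinAt_Icc hu) (hE'c.intervalIntegrable_of_Icc hcd)
    (hu'c.intervalIntegrable_of_Icc hcd)
    (fun x _ ↦ (norm_cexp_I_mul_ofReal_mul_ofReal lam (φ x)).le)).trans_eq ?_
  simp only [E, u, norm_cexp_I_mul_ofReal_mul_ofReal, norm_mul, norm_inv, norm_I, norm_real,
    Real.norm_eq_abs, abs_of_pos hlam, one_mul, abs_inv, intervalIntegral.integral_const_mul]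
  ring

theorem norm_integral_cexp_le_of_le_abs_deriv {φ φ' φ'' : ℝ → ℝ} {c d lam δ : ℝ} (hcd : c ≤ d)
    (hlam : 0 < lam) (hδ : 0 < δ)
    (hφ : ∀ x ∈ Icc c d, HasDerivWithinAt φ (φ' x) (Icc c d) x)
    (hφ' : ∀ x ∈ Icc c d, HasDerivWithinAt φ' (φ'' x) (Icc c d) x)
    (hφ''c : ContinuousOn φ'' (Icc c d)) (hφ''0 : ∀ x ∈ Icc c d, 0 ≤ φ'' x)
    (hδφ' : ∀ x ∈ Icc c d, δ ≤ |φ' x|) :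
    ‖∫ x in c..d, exp (I * lam * φ x)‖ ≤ 3 / (lam * δ) := by
  have hc := left_mem_Icc.2 hcd
  have hd := right_mem_Icc.2 hcd
  have hφ'0 : ∀ x ∈ Icc c d, φ' x ≠ 0 := fun x hx h0 ↦ by
    linarith [h0 ▸ hδφ' x hx, abs_zero (α := ℝ)]
  set w' : ℝ → ℝ := fun x ↦ -φ'' x / φ' x ^ 2
  have hw : ∀ x ∈ Icc c d, HasDerivWithinAt (fun y ↦ (φ' y)⁻¹) (w' x) (Icc c d) x :=
    fun x hx ↦ (hφ' x hx).inv (hφ'0 x hx)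
  have hw'c : ContinuousOn w' (Icc c d) :=
    hφ''c.neg.div ((HasDerivWithinAt.continuousOn hφ').pow 2)
      fun x hx ↦ pow_ne_zero 2 (hφ'0 x hx)
  have hvariation : ∫ x in c..d, |w' x| = (φ' c)⁻¹ - (φ' d)⁻¹ := by
    have hw'abs : EqOn (fun x ↦ |w' x|) (fun x ↦ -w' x) (uIcc c d) := fun x hx ↦
      abs_of_nonpos (div_nonpos_of_nonpos_of_nonneg
        (neg_nonpos.2 (hφ''0 x (uIcc_of_le hcd ▸ hx))) (sq_nonneg _))
    rw [integral_congr hw'abs, intervalIntegral.integral_neg,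
      integral_eq_sub_of_hasDerivAt_of_le hcd (HasDerivWithinAt.continuousOn hw)
        (hasDerivAt_of_forall_hasDerivWithinAt_Icc hw) (hw'c.intervalIntegrable_of_Icc hcd),
      neg_sub]
  have hmono : φ' c ≤ φ' d := by
    simpa using mul_sub_le_sub_of_le_hasDerivWithinAt_Icc hφ' hφ''0 c hc d hd hcd
  refine (norm_integral_cexp_le_of_hasDerivWithinAt_inv hcd hlam hφ hφ'0 hw hw'c).trans ?_
  rw [hvariation, abs_inv, abs_inv, div_eq_mul_inv, mul_inv, mul_left_comm]
  gcongr
  linarith [inv_anti₀ hδ (hδφ' c hc), inv_anti₀ hδ (hδφ' d hd),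
    inv_sub_inv_le_inv_of_le_abs hδ hmono (hδφ' c hc) (hδφ' d hd)]

lemma exists_Icc_split_of_monotoneOn {f : ℝ → ℝ} {c d δ : ℝ} (hcd : c ≤ d) (hδ : 0 < δ)
    (hf : ContinuousOn f (Icc c d)) (hmono : MonotoneOn f (Icc c d)) :
    ∃ u ∈ Icc c d, ∃ v ∈ Icc c d, u ≤ v ∧ (u = c ∨ f u ≤ -δ) ∧ (v = d ∨ δ ≤ f v) ∧
      f v - f u ≤ 2 * δ := by
  have hc := left_mem_Icc.2 hcd
  have hd := right_mem_Icc.2 hcd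
  by_cases hδc : δ ≤ f c
  · exact ⟨c, hc, c, hc, le_rfl, .inl rfl, .inr hδc, by linarith⟩
  by_cases hdδ : f d ≤ -δ
  · exact ⟨d, hd, d, hd, le_rfl, .inr hdδ, .inl rfl, by linarith⟩
  push Not at hδc hdδ
  obtain ⟨u, hu, hfu, hu'⟩ : ∃ u ∈ Icc c d, -δ ≤ f u ∧ (u = c ∨ f u = -δ) := by
    by_cases hcδ : f c ≤ -δ
    · obtain ⟨u, hu, hfu⟩ := intermediate_value_Icc hcd hf ⟨hcδ, hdδ.le⟩
      exact ⟨u, hu, hfu.ge, .inr hfu⟩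
    · exact ⟨c, hc, (not_le.1 hcδ).le, .inl rfl⟩
  obtain ⟨v, hv, hfv, hv'⟩ : ∃ v ∈ Icc c d, f v ≤ δ ∧ (v = d ∨ f v = δ) := by
    by_cases hδd : δ ≤ f d
    · obtain ⟨v, hv, hfv⟩ := intermediate_value_Icc hcd hf ⟨hδc.le, hδd⟩
      exact ⟨v, hv, hfv.le, .inr hfv⟩
    · exact ⟨d, hd, (not_le.1 hδd).le, .inl rfl⟩
  refine ⟨u, hu, v, hv, ?_, hu'.imp_right le_of_eq, hv'.imp_right ge_of_eq, by linarith⟩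
  rcases hu' with rfl | hu'
  · exact hv.1
  rcases hv' with rfl | hv'
  · exact hu.2
  by_contra! hvu
  linarith [hmono hv hu hvu.le]

lemma norm_integral_le_of_norm_le_const_on_middle {f : ℝ → ℂ} {c u v d C : ℝ} (hcu : c ≤ u)
    (huv : u ≤ v) (hvd : v ≤ d) (hf : ContinuousOn f (Icc c d)) (hfC : ∀ x ∈ Icc u v, ‖f x‖ ≤ C) :
    ‖∫ x in c..d, f x‖ ≤ ‖∫ x in c..u, f x‖ + C * (v - u) + ‖∫ x in v..d, f x‖ := by
  have hint : ∀ p q, c ≤ p → p ≤ q → q ≤ d → IntervalIntegrable f volume p q :=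
    fun p q hcp hpq hqd ↦ (hf.mono (Icc_subset_Icc hcp hqd)).intervalIntegrable_of_Icc hpq
  have hmid : ‖∫ x in u..v, f x‖ ≤ C * (v - u) := by
    simpa only [abs_of_nonneg (sub_nonneg.2 huv)] using
      norm_integral_le_of_norm_le_const fun x hx ↦
        hfC x (Ioc_subset_Icc_self (uIoc_of_le huv ▸ hx))
  have hcv := hcu.trans huv
  rw [← integral_add_adjacent_intervals (hint c v le_rfl hcv hvd) (hint v d hcv hvd le_rfl),
    ← integral_add_adjacent_intervals (hint c u le_rfl hcu (huv.trans hvd)) (hint u v hcu huv hvd)]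
  exact norm_add₃_le.trans (by gcongr)

theorem norm_integral_cexp_le_of_le_deriv2 {φ φ' φ'' : ℝ → ℝ} {c d lam M : ℝ} (hcd : c ≤ d)
    (hlam : 0 < lam) (hM : 0 < M)
    (hφ : ∀ x ∈ Icc c d, HasDerivWithinAt φ (φ' x) (Icc c d) x)
    (hφ' : ∀ x ∈ Icc c d, HasDerivWithinAt φ' (φ'' x) (Icc c d) x)
    (hφ''c : ContinuousOn φ'' (Icc c d)) (hMφ'' : ∀ x ∈ Icc c d, M ≤ φ'' x) :
    ‖∫ x in c..d, exp (I * lam * φ x)‖ ≤ 8 / √(lam * M) := by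
  set s := √(lam * M)
  have hs : 0 < s := Real.sqrt_pos.2 (mul_pos hlam hM)
  set δ := s / lam
  have hδ : 0 < δ := div_pos hs hlam
  have hc := left_mem_Icc.2 hcd
  have hd := right_mem_Icc.2 hcd
  have hgrowth := mul_sub_le_sub_of_le_hasDerivWithinAt_Icc hφ' hMφ''
  have hmono : MonotoneOn φ' (Icc c d) := fun x hx y hy hxy ↦ by
    nlinarith [hgrowth x hx y hy hxy]
  obtain ⟨u, hu, v, hv, huv, hu', hv', hφ'uv⟩ := exists_Icc_split_of_monotoneOn hcd hδ
    (HasDerivWithinAt.continuousOn hφ') hmono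
  have hpiece : ∀ p ∈ Icc c d, ∀ q ∈ Icc c d, p ≤ q → (q = p ∨ ∀ x ∈ Icc p q, δ ≤ |φ' x|) →
      ‖∫ x in p..q, exp (I * lam * φ x)‖ ≤ 3 / (lam * δ) := by
    rintro p hp q hq hpq (rfl | hδφ')
    · rw [integral_same, norm_zero]
      positivity
    exact norm_integral_cexp_le_of_le_abs_deriv hpq hlam hδ
      (hasDerivWithinAt_mono_Icc hφ hp.1 hq.2) (hasDerivWithinAt_mono_Icc hφ' hp.1 hq.2)
      (hφ''c.mono (Icc_subset_Icc hp.1 hq.2))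
      (fun x hx ↦ hM.le.trans (hMφ'' x (Icc_subset_Icc hp.1 hq.2 hx))) hδφ'
  have hleft := hpiece c hc u hu hu.1 <| hu'.imp_right fun hu' x hx ↦
    le_abs'.2 (.inl (by linarith [hmono ⟨hx.1, hx.2.trans hu.2⟩ hu hx.2]))
  have hright := hpiece v hv d hd hv.2 <| hv'.imp Eq.symm fun hv' x hx ↦
    le_abs'.2 (.inr (by linarith [hmono hv ⟨hv.1.trans hx.1, hx.2⟩ hx.1]))
  have hlen : v - u ≤ 2 * δ / M := by
    rw [le_div_iff₀ hM]
    linarith [hgrowth u hu v hv huv]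
  -- the choice `δ = √(lam * M) / lam` balances the two kinds of pieces
  have hbalance : 3 / (lam * δ) + 2 * δ / M + 3 / (lam * δ) = 8 / s := by
    have hss : s * s = lam * M := Real.mul_self_sqrt (mul_pos hlam hM).le
    have hδM : 2 * δ / M = 2 / s := by
      rw [div_eq_div_iff hM.ne' hs.ne', show 2 * δ * s = 2 * (s * s) / lam by ring, hss]
      field_simp
    rw [mul_div_cancel₀ s hlam.ne', hδM]
    ring
  have hE : ContinuousOn (fun x ↦ exp (I * lam * φ x)) (Icc c d) := by
    have := HasDerivWithinAt.continuousOn hφ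
    fun_prop
  calc _ ≤ ‖∫ x in c..u, exp (I * lam * φ x)‖ + 1 * (v - u)
        + ‖∫ x in v..d, exp (I * lam * φ x)‖ :=
        norm_integral_le_of_norm_le_const_on_middle hu.1 huv hv.2 hE
          fun x _ ↦ (norm_cexp_I_mul_ofReal_mul_ofReal lam (φ x)).le
    _ ≤ 8 / s := by linarith

theorem norm_integral_cexp_le_of_le_abs_deriv2 {φ φ' φ'' : ℝ → ℝ} {c d lam M : ℝ} (hcd : c ≤ d)
    (hlam : 0 < lam) (hM : 0 < M)
    (hφ : ∀ x ∈ Icc c d, HasDerivWithinAt φ (φ' x) (Icc c d) x)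
    (hφ' : ∀ x ∈ Icc c d, HasDerivWithinAt φ' (φ'' x) (Icc c d) x)
    (hφ''c : ContinuousOn φ'' (Icc c d)) (hMφ'' : ∀ x ∈ Icc c d, M ≤ |φ'' x|) :
    ‖∫ x in c..d, exp (I * lam * φ x)‖ ≤ 8 / √(lam * M) := by
  have hφ''0 : ∀ x ∈ Icc c d, φ'' x ≠ 0 := fun x hx h0 ↦ by
    linarith [h0 ▸ hMφ'' x hx, abs_zero (α := ℝ)]
  rcases isPreconnected_Icc.mapsTo_Ioi_or_Iio hφ''c hφ''0 with hpos | hneg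
  · exact norm_integral_cexp_le_of_le_deriv2 hcd hlam hM hφ hφ' hφ''c
      fun x hx ↦ (hMφ'' x hx).trans_eq (abs_of_pos (hpos hx))
  · rw [← norm_integral_cexp_neg_phase]
    exact norm_integral_cexp_le_of_le_deriv2 (φ' := fun x ↦ -φ' x) (φ'' := fun x ↦ -φ'' x)
      hcd hlam hM (fun x hx ↦ (hφ x hx).neg) (fun x hx ↦ (hφ' x hx).neg) hφ''c.neg
      fun x hx ↦ (hMφ'' x hx).trans_eq (abs_of_neg (hneg hx))

theorem stmt_10 (a b : ℝ) (hab : a < b) (lam M : ℝ) (hlam : 0 < lam) (hM : 0 < M)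
    (Φ : ℝ → ℝ) (Ψ : ℝ → ℂ)
    (hΦ : ContDiffOn ℝ 2 Φ (Icc a b))
    (hΦ'' : ∀ x ∈ Icc a b, M ≤ |iteratedDerivWithin 2 Φ (Icc a b) x|)
    (hΨ : ContDiffOn ℝ 1 Ψ (Icc a b)) :
    ‖∫ x in a..b, Complex.exp (I * lam * Φ x) * Ψ x‖
      ≤ 8 / Real.sqrt (lam * M)
          * (‖Ψ b‖ + ∫ x in a..b, ‖derivWithin Ψ (Icc a b) x‖) := by
  have hs : UniqueDiffOn ℝ (Icc a b) := uniqueDiffOn_Icc hab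
  have hΦ' : ∀ x ∈ Icc a b, HasDerivWithinAt Φ (derivWithin Φ (Icc a b) x) (Icc a b) x :=
    fun x hx ↦ (hΦ.differentiableOn two_ne_zero x hx).hasDerivWithinAt
  have hΨ' : ∀ x ∈ Icc a b, HasDerivWithinAt Ψ (derivWithin Ψ (Icc a b) x) (Icc a b) x :=
    fun x hx ↦ (hΨ.differentiableOn one_ne_zero x hx).hasDerivWithinAt
  have hE : ContinuousOn (fun x ↦ exp (I * lam * Φ x)) (Icc a b) := by
    have := hΦ.continuousOn
    fun_prop
  refine norm_integral_mul_le_of_norm_primitive_le hab.le hE hΨ.continuousOn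
    (hasDerivAt_of_forall_hasDerivWithinAt_Icc hΨ')
    ((hΨ.continuousOn_derivWithin hs le_rfl).intervalIntegrable_of_Icc hab.le) fun x hx ↦ ?_
  have hsub : Icc a x ⊆ Icc a b := Icc_subset_Icc le_rfl hx.2
  exact norm_integral_cexp_le_of_le_abs_deriv2 hx.1 hlam hM
    (hasDerivWithinAt_mono_Icc hΦ' le_rfl hx.2)
    (hasDerivWithinAt_mono_Icc (hasDerivWithinAt_derivWithin_of_contDiffOn_two hs hΦ) le_rfl hx.2)
    ((hΦ.continuousOn_iteratedDerivWithin le_rfl hs).mono hsub) fun y hy ↦ hΦ'' y (hsub hy)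
end

section
/- Let t > 0, and let c, L ∈ ℝ and α ≤ β be real numbers. Then ‖∫_α^β e^{i(tμ² + cμ)}/(e^{iμL} − 3) dμ‖ ≤ 2√2/√t. -/
/-!
Since `‖e^{iμL}‖ = 1 < 3`, the Neumann series `1 / (e^{iμL} - 3) = -∑ₖ e^{ikμL} / 3^{k+1}`
converges uniformly, so the integral equals `-∑ₖ 3^{-(k+1)} ∫ e^{i(tμ² + (c + kL)μ)} dμ`.
Completing the square turns each term into a Fresnel integral `∫_a^b e^{itμ²} dμ`, which is at most
`4 / √t`: near `0`, on `|μ| ≤ 1 / √t`, bound the integrand by `1`; beyond, integrate by parts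
against `d/dμ e^{itμ²} = 2itμ e^{itμ²}`. Summing the geometric series gives `2 / √t ≤ 2√2 / √t`.
-/

open Complex Set intervalIntegral MeasureTheory
open scoped Interval

theorem norm_integral_smul_deriv_le {E : Type*} [NormedAddCommGroup E] [NormedSpace ℝ E]
    [CompleteSpace E] {u u' : ℝ → ℝ} {v v' : ℝ → E} {a b : ℝ} (hab : a ≤ b)
    (hu : ∀ x ∈ [[a, b]], HasDerivAt u (u' x) x) (hv : ∀ x ∈ [[a, b]], HasDerivAt v (v' x) x)
    (hu' : IntervalIntegrable u' volume a b) (hv' : IntervalIntegrable v' volume a b)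
    (hu_nonneg : ∀ x ∈ Icc a b, 0 ≤ u x) (hu'_nonpos : ∀ x ∈ Icc a b, u' x ≤ 0)
    (hv_le : ∀ x ∈ Icc a b, ‖v x‖ ≤ 1) :
    ‖∫ x in a..b, u x • v' x‖ ≤ 2 * u a := by
  have hend : ∀ x ∈ Icc a b, ‖u x • v x‖ ≤ u x := fun x hx => by
    rw [norm_smul, Real.norm_of_nonneg (hu_nonneg x hx)]
    exact mul_le_of_le_one_right (hu_nonneg x hx) (hv_le x hx)
  have hrest : ‖∫ x in a..b, u' x • v x‖ ≤ u a - u b := by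
    calc ‖∫ x in a..b, u' x • v x‖ ≤ ∫ x in a..b, -u' x := by
          refine norm_integral_le_of_norm_le hab (ae_of_all _ fun x hx => ?_) hu'.neg
          have hx' := Ioc_subset_Icc_self hx
          rw [norm_smul, Real.norm_of_nonpos (hu'_nonpos x hx')]
          exact mul_le_of_le_one_right (by linarith [hu'_nonpos x hx']) (hv_le x hx')
      _ = u a - u b := by
          rw [intervalIntegral.integral_neg, integral_eq_sub_of_hasDerivAt hu hu', neg_sub]
  rw [integral_smul_deriv_eq_deriv_smul hu hv hu' hv']
  calc ‖u b • v b - u a • v a - ∫ x in a..b, u' x • v x‖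
      ≤ ‖u b • v b‖ + ‖u a • v a‖ + ‖∫ x in a..b, u' x • v x‖ :=
        (norm_sub_le _ _).trans (add_le_add_left (norm_sub_le _ _) _)
    _ ≤ u b + u a + (u a - u b) := by
        gcongr
        · exact hend b (right_mem_Icc.2 hab)
        · exact hend a (left_mem_Icc.2 hab)
    _ = 2 * u a := by ring

theorem hasSum_inv_sub_of_norm_lt {𝕜 : Type*} [NormedField 𝕜] [CompleteSpace 𝕜] {z a : 𝕜}
    (h : ‖z‖ < ‖a‖) : HasSum (fun k : ℕ => -(z ^ k / a ^ (k + 1))) (z - a)⁻¹ := by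
  have ha : a ≠ 0 := norm_pos_iff.1 ((norm_nonneg z).trans_lt h)
  have hgeom := (hasSum_geometric_of_norm_lt_one (ξ := z / a)
    (by rwa [norm_div, div_lt_one (norm_pos_iff.2 ha)])).mul_left (-a⁻¹)
  have hterm : (fun k : ℕ => -(z ^ k / a ^ (k + 1))) = fun k => -a⁻¹ * (z / a) ^ k := by
    ext k
    rw [div_pow, pow_succ]
    field_simp
  have hsum : (z - a)⁻¹ = -a⁻¹ * (1 - z / a)⁻¹ := by
    rw [one_sub_div ha, inv_div, ← neg_sub a z]
    field_simp
  rwa [hterm, hsum]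

theorem hasSum_intervalIntegral_of_norm_le {ι E : Type*} [Countable ι] [NormedAddCommGroup E]
    [NormedSpace ℝ E] {F : ι → ℝ → E} {f : ℝ → E} {b : ι → ℝ} {α β : ℝ}
    (hF : ∀ k, Continuous (F k)) (hFb : ∀ k μ, ‖F k μ‖ ≤ b k) (hb : Summable b)
    (hf : ∀ μ, HasSum (fun k => F k μ) (f μ)) :
    HasSum (fun k => ∫ μ in α..β, F k μ) (∫ μ in α..β, f μ) :=
  hasSum_integral_of_dominated_convergence (fun k _ => b k) (fun k => (hF k).aestronglyMeasurable)
    (fun k => ae_of_all _ fun μ _ => hFb k μ) (ae_of_all _ fun _ _ => hb) intervalIntegrable_const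
    (ae_of_all _ fun μ _ => hf μ)

theorem hasSum_one_third_pow_succ : HasSum (fun k : ℕ => (1 / 3 : ℝ) ^ (k + 1)) (1 / 2) := by
  have h := (hasSum_geometric_of_lt_one (r := (1 / 3 : ℝ)) (by norm_num) (by norm_num)).mul_left
    (1 / 3)
  norm_num [← pow_succ'] at h
  exact h

theorem norm_integral_cexp_I_mul_sq_le_of_pos {t δ x : ℝ} (ht : 0 < t) (hδ : 0 < δ)
    (hδx : δ ≤ x) : ‖∫ μ in δ..x, cexp (I * (t * μ ^ 2))‖ ≤ 1 / (t * δ) := by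
  have hpos : ∀ μ ∈ [[δ, x]], 0 < μ := fun μ hμ => hδ.trans_le (uIcc_of_le hδx ▸ hμ).1
  have hu : ∀ μ ∈ [[δ, x]],
      HasDerivAt (fun μ : ℝ => (2 * t * μ)⁻¹) (-(2 * t) / (2 * t * μ) ^ 2) μ := fun μ hμ => by
    simpa only [mul_one] using
      ((hasDerivAt_id' μ).const_mul (2 * t)).fun_inv (by have := hpos μ hμ; positivity)
  have hv : ∀ μ : ℝ, HasDerivAt (fun μ : ℝ => -I * cexp (I * (t * μ ^ 2)))
      (-I * (cexp (I * (t * μ ^ 2)) * (I * (t * (2 * μ))))) μ := fun μ => by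
    simpa using ((((hasDerivAt_pow 2 (μ : ℂ)).const_mul (t : ℂ)).const_mul I).cexp.const_mul
      (-I)).comp_ofReal
  have hibp := norm_integral_smul_deriv_le hδx hu (fun μ _ => hv μ)
    (ContinuousOn.intervalIntegrable <| continuousOn_const.div (by fun_prop) fun μ hμ => by
      have := hpos μ hμ; positivity)
    ((by fun_prop : Continuous _).intervalIntegrable _ _)
    (fun μ hμ => by have := hδ.trans_le hμ.1; positivity)
    (fun μ _ => div_nonpos_of_nonpos_of_nonneg (by linarith) (sq_nonneg _))
    (fun μ _ => by
      rw [norm_mul, norm_neg, norm_I, one_mul, ← ofReal_pow, ← ofReal_mul]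
      exact (norm_exp_I_mul_ofReal _).le)
  have hintegrand : ∀ μ ∈ [[δ, x]],
      (2 * t * μ)⁻¹ • (-I * (cexp (I * (t * μ ^ 2)) * (I * (t * (2 * μ)))))
        = cexp (I * (t * μ ^ 2)) := fun μ hμ => by
    have hμ0 : (μ : ℂ) ≠ 0 := ofReal_ne_zero.2 (hpos μ hμ).ne'
    have ht0 : (t : ℂ) ≠ 0 := ofReal_ne_zero.2 ht.ne'
    rw [Complex.real_smul]
    push_cast
    field_simp
    linear_combination -I_sq
  rw [integral_congr hintegrand] at hibp
  convert hibp using 1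
  field_simp

theorem norm_integral_zero_cexp_I_mul_sq_le {t : ℝ} (ht : 0 < t) (x : ℝ) :
    ‖∫ μ in (0 : ℝ)..x, cexp (I * (t * μ ^ 2))‖ ≤ 2 / √t := by
  wlog hx : 0 ≤ x generalizing x
  · have heven : ∫ μ in (0 : ℝ)..x, cexp (I * (t * μ ^ 2))
        = -∫ μ in (0 : ℝ)..(-x), cexp (I * (t * μ ^ 2)) := by
      rw [← integral_symm, ← neg_zero, ← integral_comp_neg]
      simp only [ofReal_neg, neg_sq, neg_zero]
    rw [heven, norm_neg]
    exact this (-x) (by linarith)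
  have hcont : Continuous fun μ : ℝ => cexp (I * (t * μ ^ 2)) := by fun_prop
  have hnorm : ∀ μ : ℝ, ‖cexp (I * (t * μ ^ 2))‖ ≤ 1 := fun μ => by
    rw [← ofReal_pow, ← ofReal_mul]
    exact (norm_exp_I_mul_ofReal _).le
  have hshort : ∀ y, ‖∫ μ in (0 : ℝ)..y, cexp (I * (t * μ ^ 2))‖ ≤ |y| := fun y => by
    simpa using norm_integral_le_of_norm_le_const (a := 0) (b := y) fun μ _ => hnorm μ
  have hst : 0 < √t := Real.sqrt_pos.2 ht
  set δ := (√t)⁻¹ with hδ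
  have hδ_pos : 0 < δ := inv_pos.2 hst
  rcases le_or_gt x δ with hxδ | hδx
  · calc ‖∫ μ in (0 : ℝ)..x, cexp (I * (t * μ ^ 2))‖ ≤ |x| := hshort x
      _ ≤ 2 / √t := by
          rw [abs_of_nonneg hx, div_eq_mul_inv]
          linarith
  · rw [← integral_add_adjacent_intervals (hcont.intervalIntegrable 0 δ)
      (hcont.intervalIntegrable δ x)]
    calc _ ≤ ‖∫ μ in (0 : ℝ)..δ, cexp (I * (t * μ ^ 2))‖
          + ‖∫ μ in δ..x, cexp (I * (t * μ ^ 2))‖ := norm_add_le _ _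
      _ ≤ |δ| + 1 / (t * δ) :=
          add_le_add (hshort δ) (norm_integral_cexp_I_mul_sq_le_of_pos ht hδ_pos hδx.le)
      _ = 2 / √t := by
          have htδ : t * δ = √t := by rw [hδ]; field_simp; exact (Real.sq_sqrt ht.le).symm
          rw [abs_of_pos hδ_pos, htδ, hδ]
          ring

theorem norm_integral_cexp_I_mul_sq_le {t : ℝ} (ht : 0 < t) (a b : ℝ) :
    ‖∫ μ in a..b, cexp (I * (t * μ ^ 2))‖ ≤ 4 / √t := by
  have hcont : Continuous fun μ : ℝ => cexp (I * (t * μ ^ 2)) := by fun_prop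
  rw [← integral_interval_sub_left (hcont.intervalIntegrable 0 b) (hcont.intervalIntegrable 0 a)]
  calc _ ≤ ‖∫ μ in (0 : ℝ)..b, cexp (I * (t * μ ^ 2))‖
        + ‖∫ μ in (0 : ℝ)..a, cexp (I * (t * μ ^ 2))‖ := norm_sub_le _ _
    _ ≤ 2 / √t + 2 / √t := add_le_add (norm_integral_zero_cexp_I_mul_sq_le ht b)
        (norm_integral_zero_cexp_I_mul_sq_le ht a)
    _ = 4 / √t := by ring

theorem norm_integral_cexp_I_mul_quadratic_le {t : ℝ} (ht : 0 < t) (c a b : ℝ) :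
    ‖∫ μ in a..b, cexp (I * (t * μ ^ 2 + c * μ))‖ ≤ 4 / √t := by
  have hsquare : ∀ μ : ℝ, cexp (I * (t * μ ^ 2 + c * μ))
      = cexp (I * ((-(c ^ 2 / (4 * t)) : ℝ) : ℂ))
        * cexp (I * (t * ((μ + c / (2 * t) : ℝ) : ℂ) ^ 2)) := fun μ => by
    have ht0 : (t : ℂ) ≠ 0 := ofReal_ne_zero.2 ht.ne'
    rw [← Complex.exp_add]
    congr 1
    push_cast
    field_simp
    ring
  rw [integral_congr fun μ _ => hsquare μ, intervalIntegral.integral_const_mul, norm_mul,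
    norm_exp_I_mul_ofReal, one_mul,
    integral_comp_add_right fun μ : ℝ => cexp (I * (t * (μ : ℂ) ^ 2))]
  exact norm_integral_cexp_I_mul_sq_le ht _ _

theorem norm_cexp_I_mul_quadratic (t c μ : ℝ) : ‖cexp (I * (t * μ ^ 2 + c * μ))‖ = 1 := by
  rw [← ofReal_pow, ← ofReal_mul, ← ofReal_mul, ← ofReal_add, norm_exp_I_mul_ofReal]

theorem hasSum_cexp_div_cexp_sub_three (t c L μ : ℝ) :
    HasSum (fun k : ℕ => -(3 ^ (k + 1))⁻¹ * cexp (I * (t * μ ^ 2 + ((c + k * L : ℝ) : ℂ) * μ)))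
      (cexp (I * (t * μ ^ 2 + c * μ)) / (cexp (I * μ * L) - 3)) := by
  have hz : ‖cexp (I * μ * L)‖ < ‖(3 : ℂ)‖ := by
    rw [mul_assoc, ← ofReal_mul, norm_exp_I_mul_ofReal]
    norm_num
  have hterm : (fun k : ℕ => -(3 ^ (k + 1))⁻¹ * cexp (I * (t * μ ^ 2 + ((c + k * L : ℝ) : ℂ) * μ)))
      = fun k : ℕ => cexp (I * (t * μ ^ 2 + c * μ)) * -(cexp (I * μ * L) ^ k / 3 ^ (k + 1)) := by
    ext k
    rw [← Complex.exp_nat_mul, mul_neg, mul_div_assoc', ← Complex.exp_add]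
    push_cast
    ring_nf
  rw [hterm, div_eq_mul_inv]
  exact (hasSum_inv_sub_of_norm_lt hz).mul_left _

theorem stmt_12_general (t : ℝ) (ht : 0 < t) (c L : ℝ) (α β : ℝ) :
    ‖∫ μ in α..β,
        Complex.exp (I * (t * μ ^ 2 + c * μ)) / (Complex.exp (I * μ * L) - 3)‖
      ≤ 2 * Real.sqrt 2 / Real.sqrt t := by
  have hcoeff : ∀ k : ℕ, ‖-(3 ^ (k + 1) : ℂ)⁻¹‖ = (1 / 3) ^ (k + 1) := fun k => by
    rw [norm_neg, norm_inv, norm_pow, RCLike.norm_ofNat, one_div, inv_pow]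
  have hsum := hasSum_intervalIntegral_of_norm_le (α := α) (β := β) (fun k => by fun_prop)
    (fun k μ => by rw [norm_mul, hcoeff, norm_cexp_I_mul_quadratic, mul_one])
    hasSum_one_third_pow_succ.summable (hasSum_cexp_div_cexp_sub_three t c L)
  have hterm : ∀ k : ℕ, ‖∫ μ in α..β,
      -(3 ^ (k + 1))⁻¹ * cexp (I * (t * μ ^ 2 + ((c + k * L : ℝ) : ℂ) * μ))‖
        ≤ (1 / 3) ^ (k + 1) * (4 / √t) := fun k => by
    rw [intervalIntegral.integral_const_mul, norm_mul, hcoeff]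
    gcongr
    exact norm_integral_cexp_I_mul_quadratic_le ht _ _ _
  calc _ ≤ 1 / 2 * (4 / √t) :=
        hsum.norm_le_of_bounded (hasSum_one_third_pow_succ.mul_right _) hterm
    _ ≤ 2 * √2 / √t := by
        rw [show 1 / 2 * (4 / √t) = 2 / √t by ring]
        gcongr
        exact le_mul_of_one_le_right zero_le_two (Real.one_le_sqrt.2 one_le_two)

theorem stmt_12 (t : ℝ) (ht : 0 < t) (c L : ℝ) (α β : ℝ) (hαβ : α ≤ β) :
    ‖∫ μ in α..β,
        Complex.exp (I * (t * μ ^ 2 + c * μ)) / (Complex.exp (I * μ * L) - 3)‖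
      ≤ 2 * Real.sqrt 2 / Real.sqrt t :=
  stmt_12_general t ht c L α β
end

section
/- Let L ∈ ℝ and define Ψ : ℝ → ℂ by Ψ(μ) = 4(1 − e^{iμL})/(e^{iμL} − 3). Then Ψ is differentiable at every μ ∈ ℝ with Ψ'(μ) = 8iL·e^{iμL}/(e^{iμL} − 3)², and if moreover μ ≥ 0 and L ≥ 0 then ‖Ψ'(μ)‖ ≤ 2L + μL². -/
/-! Ψ is the Möbius map w ↦ 4(1 - w)/(w - 3), with derivative 8/(w - 3)², composed with
μ ↦ e^{iμL}. Since |e^{iμL}| = 1 we have |e^{iμL} - 3| ≥ 2, so |Ψ'(μ)| ≤ 8L/4 = 2L. -/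

open Complex

namespace Complex

lemma norm_exp_I_mul_ofReal_mul_ofReal (x y : ℝ) : ‖exp (I * x * y)‖ = 1 := by
  rw [show I * x * y = ((x * y : ℝ) : ℂ) * I by push_cast; ring]
  exact norm_exp_ofReal_mul_I _

lemma two_le_norm_sub_three {z : ℂ} (hz : ‖z‖ = 1) : 2 ≤ ‖z - 3‖ := by
  have h := norm_sub_norm_le (3 : ℂ) z
  rw [norm_sub_rev, hz] at h
  norm_num at h
  linarith

lemma hasDerivAt_exp_I_mul_ofReal_mul_ofReal (μ L : ℝ) :
    HasDerivAt (fun μ : ℝ => exp (I * μ * L)) (I * L * exp (I * μ * L)) μ := by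
  have hlin : HasDerivAt (fun μ : ℝ => I * μ * L) (I * L) μ := by
    simpa using ((ofRealCLM.hasDerivAt (x := μ)).const_mul I).mul_const (L : ℂ)
  simpa [mul_comm] using hlin.cexp

lemma hasDerivAt_four_mul_one_sub_div_sub_three {w : ℂ} (hw : w - 3 ≠ 0) :
    HasDerivAt (fun w : ℂ => 4 * (1 - w) / (w - 3)) (8 / (w - 3) ^ 2) w := by
  have h := (((hasDerivAt_id w).const_sub 1).const_mul 4).div ((hasDerivAt_id w).sub_const 3) hw
  exact h.congr_deriv (by simp only [id]; ring)

end Complex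

theorem stmt_17 (L : ℝ) (Ψ : ℝ → ℂ)
    (hΨ : ∀ μ : ℝ, Ψ μ = 4 * (1 - Complex.exp (I * μ * L)) / (Complex.exp (I * μ * L) - 3)) :
    (∀ μ : ℝ, HasDerivAt Ψ
        (8 * I * L * Complex.exp (I * μ * L) / (Complex.exp (I * μ * L) - 3) ^ 2) μ) ∧
    (∀ μ : ℝ, 0 ≤ μ → 0 ≤ L →
        ‖8 * I * (L : ℂ) * Complex.exp (I * μ * L) / (Complex.exp (I * μ * L) - 3) ^ 2‖
          ≤ 2 * L + μ * L ^ 2) := by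
  have hden (μ : ℝ) : 2 ≤ ‖exp (I * μ * L) - 3‖ :=
    two_le_norm_sub_three (norm_exp_I_mul_ofReal_mul_ofReal μ L)
  refine ⟨fun μ => ?_, fun μ hμ hL => ?_⟩
  · have hne : exp (I * μ * L) - 3 ≠ 0 := norm_pos_iff.mp (by linarith [hden μ])
    have h := (hasDerivAt_four_mul_one_sub_div_sub_three hne).comp μ
      (hasDerivAt_exp_I_mul_ofReal_mul_ofReal μ L)
    rw [show Ψ = _ from funext hΨ]
    exact h.congr_deriv (by ring)
  · have hnum : ‖8 * I * (L : ℂ) * exp (I * μ * L)‖ = 8 * L := by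
      simp [norm_exp_I_mul_ofReal_mul_ofReal, abs_of_nonneg hL]
    calc ‖8 * I * (L : ℂ) * exp (I * μ * L) / (exp (I * μ * L) - 3) ^ 2‖
        = 8 * L / ‖exp (I * μ * L) - 3‖ ^ 2 := by rw [norm_div, norm_pow, hnum]
      _ ≤ 8 * L / 2 ^ 2 := by gcongr; exact hden μ
      _ ≤ 2 * L + μ * L ^ 2 := by nlinarith [mul_nonneg hμ (sq_nonneg L)]
end

section
/- Let L > 0 and 0 < a < b be real numbers, and let h : ℂ → ℂ be entire. Then there exist constants C > 0 and ε₀ > 0 such that for all λ ∈ [a, b] and all ε with 0 < ε < ε₀, one has ‖h(λ) − h(λ + iε)‖ ≤ C·‖sin((L/2)·√(λ + iε))‖, where √ denotes the principal branch of the complex square root. -/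
/-!
Everywhere `‖sin w‖ ≥ |sinh (Im w)| ≥ |Im w|`, and `Im √z = Im z / (2 Re √z) ≥ Im z / (2 √‖z‖)`;
so for `λ + iε` in a bounded set, `‖sin ((L/2) √(λ + iε))‖` is at least a fixed multiple of `ε`,
with no separate treatment of the real zeros of the sine. The entire function `h` is Lipschitz on
the compact rectangle `[a, b] × [0, 1]`, so `‖h λ - h (λ + iε)‖ ≤ K ε`.
-/

open Complex

namespace Complex

lemma abs_sinh_im_le_norm_sin (w : ℂ) : |Real.sinh w.im| ≤ ‖sin w‖ := by
  have hsq : ‖sin w‖ ^ 2 = Real.sin w.re ^ 2 + Real.sinh w.im ^ 2 := by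
    rw [Complex.sq_norm, sin_eq, ← ofReal_sin, ← ofReal_cos, ← ofReal_cosh, ← ofReal_sinh,
      normSq_apply]
    simp only [add_re, add_im, mul_re, mul_im, ofReal_re, ofReal_im, I_re, I_im]
    nlinarith [Real.sin_sq_add_cos_sq w.re, Real.cosh_sq w.im]
  exact abs_le_of_sq_le_sq (by nlinarith [sq_nonneg (Real.sin w.re)]) (norm_nonneg _)

lemma abs_im_le_norm_sin (w : ℂ) : |w.im| ≤ ‖sin w‖ := by
  calc |w.im| ≤ Real.sinh |w.im| := Real.self_le_sinh_iff.2 (abs_nonneg _)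
    _ = |Real.sinh w.im| := (Real.abs_sinh _).symm
    _ ≤ ‖sin w‖ := abs_sinh_im_le_norm_sin w

lemma abs_im_le_two_mul_sqrt_norm_mul_abs_im_cpow_inv_two (z : ℂ) :
    |z.im| ≤ 2 * √‖z‖ * |(z ^ (2⁻¹ : ℂ)).im| := by
  set s := z ^ (2⁻¹ : ℂ)
  have him : z.im = 2 * s.re * s.im := by
    conv_lhs => rw [← cpow_nat_inv_pow z two_ne_zero]
    simp only [pow_two, mul_im]; push_cast; ring
  have hre : |s.re| ≤ √‖z‖ := by
    calc |s.re| ≤ ‖s‖ := abs_re_le_norm s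
      _ = √‖z‖ := by
        simpa [Real.sqrt_eq_rpow, one_div] using norm_cpow_inv_nat z 2
  rw [him, abs_mul, abs_mul, abs_two]
  gcongr

lemma mul_abs_im_le_norm_sin_mul_cpow_inv_two {c : ℝ} (hc : 0 ≤ c) (z : ℂ) :
    c * |z.im| ≤ 2 * √‖z‖ * ‖sin (c * z ^ (2⁻¹ : ℂ))‖ := by
  calc c * |z.im| ≤ c * (2 * √‖z‖ * |(z ^ (2⁻¹ : ℂ)).im|) :=
        mul_le_mul_of_nonneg_left (abs_im_le_two_mul_sqrt_norm_mul_abs_im_cpow_inv_two z) hc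
    _ = 2 * √‖z‖ * |(c * z ^ (2⁻¹ : ℂ)).im| := by
        rw [im_ofReal_mul, abs_mul, abs_of_nonneg hc]; ring
    _ ≤ 2 * √‖z‖ * ‖sin (c * z ^ (2⁻¹ : ℂ))‖ := by gcongr; exact abs_im_le_norm_sin _

end Complex

theorem stmt_18_general (L a b : ℝ) (hL : 0 < L)
    (h : ℂ → ℂ) (hh : Differentiable ℂ h) :
    ∃ C > (0 : ℝ), ∃ ε₀ > (0 : ℝ), ∀ lam ∈ Set.Icc a b, ∀ ε : ℝ, 0 < ε → ε < ε₀ →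
      ‖h lam - h (lam + I * ε)‖
        ≤ C * ‖Complex.sin ((L / 2) * ((lam + I * ε) ^ ((1 : ℂ) / 2)))‖ := by
  have hrect : IsCompact (Set.Icc a b ×ℂ Set.Icc 0 1) := isCompact_Icc.reProdIm isCompact_Icc
  obtain ⟨K, hK⟩ :=
    hh.contDiff.locallyLipschitz.locallyLipschitzOn.exists_lipschitzOnWith_of_compact hrect
  obtain ⟨R, hR, hzR⟩ := hrect.isBounded.exists_pos_norm_le
  refine ⟨4 * √R * (K + 1) / L, by positivity, 1, one_pos, fun lam hlam ε hε hε1 => ?_⟩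
  set z : ℂ := lam + I * ε
  have hz : z ∈ Set.Icc a b ×ℂ Set.Icc 0 1 := by simp [z, mem_reProdIm, hlam, hε.le, hε1.le]
  have hlip : ‖h lam - h z‖ ≤ K * ε := by
    simpa [z, abs_of_pos hε] using hK.norm_sub_le (x := lam) (by simpa [mem_reProdIm] using hlam) hz
  have hsin : L / 2 * ε ≤ 2 * √R * ‖sin ((L / 2) * z ^ ((1 : ℂ) / 2))‖ := by
    calc L / 2 * ε = L / 2 * |z.im| := by simp [z, abs_of_pos hε]
      _ ≤ 2 * √‖z‖ * ‖sin ((L / 2 : ℝ) * z ^ (2⁻¹ : ℂ))‖ :=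
        mul_abs_im_le_norm_sin_mul_cpow_inv_two (by positivity) z
      _ ≤ 2 * √R * ‖sin ((L / 2) * z ^ ((1 : ℂ) / 2))‖ := by
        rw [one_div]; push_cast; gcongr; exact hzR z hz
  calc ‖h lam - h z‖ ≤ K * ε := hlip
    _ ≤ (K + 1) * ε := by gcongr; linarith
    _ = (K + 1) * (2 / L) * (L / 2 * ε) := by field_simp
    _ ≤ (K + 1) * (2 / L) * (2 * √R * ‖sin ((L / 2) * z ^ ((1 : ℂ) / 2))‖) := by gcongr
    _ = 4 * √R * (K + 1) / L * ‖sin ((L / 2) * z ^ ((1 : ℂ) / 2))‖ := by ring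

theorem stmt_18 (L a b : ℝ) (hL : 0 < L) (ha : 0 < a) (hab : a < b)
    (h : ℂ → ℂ) (hh : Differentiable ℂ h) :
    ∃ C > (0 : ℝ), ∃ ε₀ > (0 : ℝ), ∀ lam ∈ Set.Icc a b, ∀ ε : ℝ, 0 < ε → ε < ε₀ →
      ‖h lam - h (lam + I * ε)‖
        ≤ C * ‖Complex.sin ((L / 2) * ((lam + I * ε) ^ ((1 : ℂ) / 2)))‖ :=
  stmt_18_general L a b hL h hh
end
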